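/- Let ω ∈ Ω, m ∈ ℕ and b = (m−1,0), and define the configuration ω^b by: ω^b(0,0) = ω(γ_b^ω); ω^b(0,y) = ω(γ_{b+(0,y)}^ω) − ω(γ_{b+(0,y−1)}^ω) for y ≥ 1; and ω^b(z) = ω(b+z) otherwise. Then ω^b is a configuration (all values are nonnegative), ω^b(γ_z^{ω^b}) = ω(γ_{b+z}^ω) for every z ∈ ℤ₊², and V(T_{(1,1)}^{ω^b}) = V(T_{(m,1)}^ω) − b. -/

import Mathlib

open scoped NNReal

/-- A site of the lattice `ℤ²`. -/
abbrev Site : Type := ℤ × ℤ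

/-- The positive quadrant `ℤ₊²`. -/
def posQuad : Set Site := {z : Site | 0 ≤ z.1 ∧ 0 ≤ z.2}

/-- An admissible (up-right) step. -/
def IsStep (u v : Site) : Prop := v = u + (1, 0) ∨ v = u + (0, 1)

/-- `γ` is an up-right path from `(0,0)` to `z`, i.e. `γ ∈ Γ_z`. -/
def IsPathTo (z : Site) (γ : List Site) : Prop :=
  γ.head? = some ((0, 0) : Site) ∧ γ.getLast? = some z ∧ γ.Chain' IsStep

/-- The length `ω(γ) = Σ_{z ∈ γ} ω(z)` of a path `γ` under the configuration `ω`. -/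
noncomputable def plen (ω : Site → ℝ) (γ : List Site) : ℝ := (γ.map ω).sum

/-- `γ ∈ Γ_z` is `ω`-optimal if its length is maximal over `Γ_z`. -/
def IsOptimal (ω : Site → ℝ) (z : Site) (γ : List Site) : Prop :=
  IsPathTo z γ ∧ ∀ γ' : List Site, IsPathTo z γ' → plen ω γ' ≤ plen ω γ

/-- `γ` is below `γ'`: at every step index, the second coordinate of the site of `γ`
is at most that of the corresponding site of `γ'`. -/
def Below (γ γ' : List Site) : Prop :=
  ∀ (i : ℕ) (h : i < γ.length) (h' : i < γ'.length),
    (γ.get ⟨i, h⟩).2 ≤ (γ'.get ⟨i, h'⟩).2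

/-- `γ` is the low-optimal path of `Γ_z`: it is `ω`-optimal and below every
`ω`-optimal path of `Γ_z`. -/
def IsLowOptimal (ω : Site → ℝ) (z : Site) (γ : List Site) : Prop :=
  IsOptimal ω z γ ∧ ∀ γ' : List Site, IsOptimal ω z γ' → Below γ γ'

open Classical in
/-- The low-optimal path `γ_z^ω` (an arbitrary default when it does not exist). -/
noncomputable def lowOpt (ω : Site → ℝ) (z : Site) : List Site :=
  if h : ∃ γ : List Site, IsLowOptimal ω z γ then h.choose else []

/-- The vertex set `V(T_z^ω) = {z' ∈ ℤ₊² : z ∈ γ_{z'}^ω}` of the subtree rooted at `z`. -/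
def treeV (ω : Site → ℝ) (z : Site) : Set Site :=
  {z' : Site | z' ∈ posQuad ∧ z ∈ lowOpt ω z'}

/-!
Write `G_ω(z) = ω(γ_z^ω)`. Low-optimal paths exist because the pointwise lower and upper
envelopes of two optimal paths are again optimal paths. For `z ≠ (0,0)`, `γ_z^ω` is `γ_p^ω`
followed by `z`, where `p` is the predecessor of `z` with the larger `G_ω`, the lower one in case
of a tie; hence `G_ω(z) = G_ω(p) + ω(z)`, and `G_ω` grows by at least `ω(z) ≥ 0` along a step.

On the vertical axis `ω^b` is chosen so that `G_{ω^b}(0,y)` telescopes to `G_ω(b + (0,y))`; off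
the axis `ω^b` is `ω` translated by `b`. Induction on `z` then gives `G_{ω^b}(z) = G_ω(b + z)`, so
that off the axis the predecessors chosen for `ω^b` at `z` and for `ω` at `b + z` correspond under
translation. A second induction transports membership of `(1,1)` in `γ_z^{ω^b}` to membership of
`b + (1,1) = (m,1)` in `γ_{b+z}^ω`; on the axis neither can occur.
-/

@[simp] lemma mem_posQuad_iff {z : Site} : z ∈ posQuad ↔ 0 ≤ z.1 ∧ 0 ≤ z.2 := Iff.rfl

lemma isStep_iff {p z : Site} :
    IsStep p z ↔ z.1 = p.1 + 1 ∧ z.2 = p.2 ∨ z.1 = p.1 ∧ z.2 = p.2 + 1 := by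
  simp [IsStep, Prod.ext_iff]

lemma isStep_iff_eq_sub {p z : Site} : IsStep p z ↔ p = z - (1, 0) ∨ p = z - (0, 1) := by
  simp only [IsStep, eq_sub_iff_add_eq, eq_comm]

lemma IsStep.le {p z : Site} (h : IsStep p z) : p ≤ z := by
  rcases h with rfl | rfl <;> exact le_add_of_nonneg_right (by decide)

lemma IsStep.mem_posQuad {p z : Site} (hpz : IsStep p z) (hp : p ∈ posQuad) : z ∈ posQuad := by
  rw [isStep_iff] at hpz
  rw [mem_posQuad_iff] at hp ⊢
  omega

lemma exists_isStep_of_ne_origin {z : Site} (hz : z ∈ posQuad) (hz0 : z ≠ (0, 0)) :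
    ∃ p ∈ posQuad, IsStep p z := by
  rw [mem_posQuad_iff] at hz
  by_cases hx : z.1 = 0
  · refine ⟨z - (0, 1), ?_, isStep_iff_eq_sub.2 (Or.inr rfl)⟩
    have : z.2 ≠ 0 := fun hy => hz0 (Prod.ext hx hy)
    simp only [mem_posQuad_iff, Prod.fst_sub, Prod.snd_sub]
    omega
  · refine ⟨z - (1, 0), ?_, isStep_iff_eq_sub.2 (Or.inl rfl)⟩
    simp only [mem_posQuad_iff, Prod.fst_sub, Prod.snd_sub]
    omega

theorem posQuad_induction {P : (z : Site) → z ∈ posQuad → Prop}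
    (origin : P (0, 0) ⟨le_rfl, le_rfl⟩)
    (step : ∀ z (hz : z ∈ posQuad), z ≠ (0, 0) →
      (∀ p (hp : p ∈ posQuad), IsStep p z → P p hp) → P z hz) :
    ∀ z (hz : z ∈ posQuad), P z hz := by
  suffices ∀ n : ℕ, ∀ z (hz : z ∈ posQuad), z.1 + z.2 = n → P z hz by
    intro z hz
    exact this (z.1 + z.2).toNat z hz (by rw [mem_posQuad_iff] at hz; omega)
  intro n
  induction n with
  | zero =>
    intro z hz hn
    obtain rfl : z = (0, 0) := by
      rw [mem_posQuad_iff] at hz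
      exact Prod.ext (by simp; omega) (by simp; omega)
    exact origin
  | succ n ih =>
    refine fun z hz hn => step z hz (by rintro rfl; simp at hn; omega) fun p hp hpz => ih p hp ?_
    rw [isStep_iff] at hpz
    omega

lemma isPathTo_origin : IsPathTo (0, 0) [(0, 0)] := ⟨rfl, rfl, List.isChain_singleton _⟩

namespace IsPathTo

variable {z : Site} {γ : List Site}

lemma ne_nil (h : IsPathTo z γ) : γ ≠ [] := by
  rintro rfl
  simp [IsPathTo] at h

lemma mem (h : IsPathTo z γ) : z ∈ γ := List.mem_of_getLast? h.2.1

lemma append_singleton {p : Site} (hγ : IsPathTo p γ) (hpz : IsStep p z) :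
    IsPathTo z (γ ++ [z]) := by
  refine ⟨?_, List.getLast?_concat, ?_⟩
  · rw [List.head?_append_of_ne_nil _ hγ.ne_nil]
    exact hγ.1
  · refine List.IsChain.append hγ.2.2 (List.isChain_singleton z) ?_
    simp [hγ.2.1, hpz]

lemma eq_singleton_or_exists_append (h : IsPathTo z γ) :
    z = (0, 0) ∧ γ = [(0, 0)] ∨ ∃ p δ, IsStep p z ∧ IsPathTo p δ ∧ γ = δ ++ [z] := by
  obtain ⟨hhead, hlast, hchain⟩ := h
  have hne : γ ≠ [] := by rintro rfl; simp at hhead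
  have hsplit := List.dropLast_append_getLast hne
  rw [List.getLast?_eq_some_getLast hne, Option.some_inj] at hlast
  rw [hlast] at hsplit
  rw [← hsplit] at hchain hhead
  rcases eq_or_ne γ.dropLast [] with hnil | hδ
  · rw [hnil, List.nil_append] at hsplit hhead
    simp only [List.head?_cons, Option.some_inj] at hhead
    exact Or.inl ⟨hhead, by rw [← hsplit, hhead]⟩
  · obtain ⟨hδchain, -, hstep⟩ := List.isChain_append.1 hchain
    refine Or.inr ⟨γ.dropLast.getLast hδ, γ.dropLast,
      hstep _ (List.getLast?_eq_some_getLast hδ) _ rfl,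
      ⟨?_, List.getLast?_eq_some_getLast hδ, hδchain⟩, hsplit.symm⟩
    rwa [List.head?_append_of_ne_nil _ hδ] at hhead

theorem induction {P : (z : Site) → (γ : List Site) → IsPathTo z γ → Prop}
    (origin : P (0, 0) [(0, 0)] isPathTo_origin)
    (append : ∀ p z γ (hγ : IsPathTo p γ) (hpz : IsStep p z),
      P p γ hγ → P z (γ ++ [z]) (hγ.append_singleton hpz)) :
    ∀ {z γ} (h : IsPathTo z γ), P z γ h := by
  intro z γ h
  induction hn : γ.length generalizing z γ with
  | zero => exact absurd (List.length_eq_zero_iff.1 hn) h.ne_nil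
  | succ n ih =>
    rcases h.eq_singleton_or_exists_append with ⟨rfl, rfl⟩ | ⟨p, δ, hpz, hδ, rfl⟩
    · exact origin
    · exact append p z δ hδ hpz (ih hδ (by simpa using hn))

lemma mem_Icc (h : IsPathTo z γ) : ∀ s ∈ γ, s ∈ Set.Icc 0 z := by
  induction h using IsPathTo.induction with
  | origin =>
    intro s hs
    rw [List.mem_singleton.1 hs]
    exact ⟨le_rfl, le_rfl⟩
  | append p z γ hγ hpz ih =>
    intro s hs
    rcases List.mem_append.1 hs with hs | hs
    · exact ⟨(ih s hs).1, (ih s hs).2.trans hpz.le⟩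
    · rw [List.mem_singleton.1 hs]
      exact ⟨(ih p hγ.mem).1.trans hpz.le, le_rfl⟩

lemma mem_posQuad (h : IsPathTo z γ) : z ∈ posQuad :=
  ⟨(h.mem_Icc z h.mem).1.1, (h.mem_Icc z h.mem).1.2⟩

lemma length_eq (h : IsPathTo z γ) : (γ.length : ℤ) = z.1 + z.2 + 1 := by
  induction h using IsPathTo.induction with
  | origin => simp
  | append p z γ hγ hpz ih =>
    rw [isStep_iff] at hpz
    simp only [List.length_append, List.length_singleton, Nat.cast_add, Nat.cast_one]
    omega

lemma length_eq_length {p : Site} {δ : List Site} (hγ : IsPathTo z γ) (hδ : IsPathTo p δ)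
    (h : z.1 + z.2 = p.1 + p.2) : γ.length = δ.length := by
  have := hγ.length_eq
  have := hδ.length_eq
  omega

lemma getElem_fst_add_snd (h : IsPathTo z γ) : ∀ i (hi : i < γ.length), γ[i].1 + γ[i].2 = i := by
  induction h using IsPathTo.induction with
  | origin => simp
  | append p z γ hγ hpz ih =>
    intro i hi
    rw [List.length_append, List.length_singleton] at hi
    rcases Nat.lt_succ_iff_lt_or_eq.1 hi with hi | rfl
    · rw [List.getElem_append_left hi]
      exact ih i hi
    · rw [List.getElem_concat_length rfl, hγ.length_eq]
      rw [isStep_iff] at hpz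
      omega

lemma getElem_of_add_one_eq_length (h : IsPathTo z γ) {i : ℕ} (hi : i + 1 = γ.length) :
    γ[i] = z := by
  have := h.2.1
  rw [List.getLast?_eq_getElem?, ← hi, Nat.add_sub_cancel,
    List.getElem?_eq_getElem (by omega)] at this
  exact Option.some_injective _ this

end IsPathTo

lemma isPathTo_origin_iff {γ : List Site} : IsPathTo (0, 0) γ ↔ γ = [(0, 0)] := by
  refine ⟨fun h => ?_, fun h => h ▸ isPathTo_origin⟩
  rcases h.eq_singleton_or_exists_append with ⟨-, h⟩ | ⟨p, δ, hp, hδ, -⟩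
  · exact h
  · have := hδ.mem_posQuad
    rw [isStep_iff] at hp
    simp at this hp
    omega

lemma exists_isPathTo {z : Site} (hz : z ∈ posQuad) : ∃ γ, IsPathTo z γ := by
  induction z, hz using posQuad_induction with
  | origin => exact ⟨_, isPathTo_origin⟩
  | step z hz hz0 ih =>
    obtain ⟨p, hp, hpz⟩ := exists_isStep_of_ne_origin hz hz0
    obtain ⟨γ, hγ⟩ := ih p hp hpz
    exact ⟨_, hγ.append_singleton hpz⟩

theorem finite_setOf_isPathTo (z : Site) : {γ | IsPathTo z γ}.Finite := by
  by_cases hz : z ∈ posQuad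
  swap
  · exact Set.finite_empty.subset fun γ hγ => hz (IsPathTo.mem_posQuad hγ)
  induction z, hz using posQuad_induction with
  | origin => simp [isPathTo_origin_iff]
  | step z hz hz0 ih =>
    have hpred : {p | IsStep p z}.Finite :=
      (Set.toFinite {z - (1, 0), z - (0, 1)}).subset fun p hp => by
        simpa [isStep_iff_eq_sub] using hp
    refine ((hpred.inter_of_left posQuad).biUnion fun p hp =>
      (ih p hp.2 hp.1).image (· ++ [z])).subset fun γ hγ => ?_
    rcases IsPathTo.eq_singleton_or_exists_append hγ with ⟨rfl, -⟩ | ⟨p, δ, hpz, hδ, rfl⟩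
    · exact absurd rfl hz0
    · simp only [Set.mem_iUnion, Set.mem_image]
      exact ⟨p, ⟨hpz, hδ.mem_posQuad⟩, δ, hδ, rfl⟩

@[simp] lemma plen_nil (ω : Site → ℝ) : plen ω [] = 0 := rfl

@[simp] lemma plen_cons (ω : Site → ℝ) (s : Site) (γ : List Site) :
    plen ω (s :: γ) = ω s + plen ω γ := by
  simp [plen]

@[simp] lemma plen_append_singleton (ω : Site → ℝ) (γ : List Site) (z : Site) :
    plen ω (γ ++ [z]) = plen ω γ + ω z := by
  simp [plen]

lemma plen_nonneg {ω : Site → ℝ} (hω : ∀ z, 0 ≤ ω z) (γ : List Site) : 0 ≤ plen ω γ :=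
  List.sum_nonneg fun x hx => by
    obtain ⟨s, -, rfl⟩ := List.mem_map.1 hx
    exact hω s

namespace Below

variable {γ δ : List Site}

lemma of_append_singleton {z : Site} (h : Below (γ ++ [z]) (δ ++ [z])) : Below γ δ := by
  intro i hi hi'
  have := h i (by simp; omega) (by simp; omega)
  simpa [List.getElem_append_left hi, List.getElem_append_left hi'] using this

lemma snd_le {p q : Site} (h : Below γ δ) (hγ : IsPathTo p γ) (hδ : IsPathTo q δ)
    (hpq : p.1 + p.2 = q.1 + q.2) : p.2 ≤ q.2 := by
  have hlen := hγ.length_eq_length hδ hpq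
  obtain ⟨n, hn⟩ : ∃ n, n + 1 = γ.length :=
    ⟨γ.length - 1, by have := List.length_pos_iff.2 hγ.ne_nil; omega⟩
  have := h n (by omega) (by omega)
  simpa only [List.get_eq_getElem, hγ.getElem_of_add_one_eq_length hn,
    hδ.getElem_of_add_one_eq_length (hn.trans hlen)] using this

lemma antisymm {z : Site} (h : Below γ δ) (h' : Below δ γ) (hγ : IsPathTo z γ)
    (hδ : IsPathTo z δ) : γ = δ := by
  have hlen := hγ.length_eq_length hδ rfl
  refine List.ext_getElem hlen fun i hi hi' => ?_
  have h2 : γ[i].2 = δ[i].2 := le_antisymm (h i hi hi') (h' i hi' hi)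
  have := hγ.getElem_fst_add_snd i hi
  have := hδ.getElem_fst_add_snd i hi'
  exact Prod.ext (by omega) h2

end Below

def heights (γ : List Site) (i : ℕ) : ℤ := (γ.getD i 0).2

lemma Below.of_heights_le {γ δ : List Site} (h : heights γ ≤ heights δ) : Below γ δ := by
  intro i hi hi'
  have := h i
  rwa [heights, heights, List.getD_eq_getElem _ _ hi, List.getD_eq_getElem _ _ hi'] at this

def lowerSite (s t : Site) : Site := if s.2 ≤ t.2 then s else t

def upperSite (s t : Site) : Site := if s.2 ≤ t.2 then t else s

lemma isStep_lowerSite {s s' t t' : Site} (hs : IsStep s s') (ht : IsStep t t')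
    (hst : s.1 + s.2 = t.1 + t.2) : IsStep (lowerSite s t) (lowerSite s' t') := by
  rw [isStep_iff] at hs ht ⊢
  unfold lowerSite
  split_ifs <;> omega

lemma isStep_upperSite {s s' t t' : Site} (hs : IsStep s s') (ht : IsStep t t')
    (hst : s.1 + s.2 = t.1 + t.2) : IsStep (upperSite s t) (upperSite s' t') := by
  rw [isStep_iff] at hs ht ⊢
  unfold upperSite
  split_ifs <;> omega

lemma IsPathTo.zipWith {f : Site → Site → Site} (hf₀ : f (0, 0) (0, 0) = (0, 0))
    (hf : ∀ {s s' t t'}, IsStep s s' → IsStep t t' → s.1 + s.2 = t.1 + t.2 →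
      IsStep (f s t) (f s' t'))
    {p q : Site} {γ δ : List Site} (hγ : IsPathTo p γ) (hδ : IsPathTo q δ)
    (hpq : p.1 + p.2 = q.1 + q.2) : IsPathTo (f p q) (List.zipWith f γ δ) := by
  induction hγ using IsPathTo.induction generalizing q δ with
  | origin =>
    have hq := hδ.mem_posQuad
    obtain rfl : q = (0, 0) := by
      rw [mem_posQuad_iff] at hq
      exact Prod.ext (by simp; omega) (by simp; omega)
    rw [isPathTo_origin_iff.1 hδ]
    simpa [hf₀] using isPathTo_origin
  | append p' p γ hγ hpz ih =>
    have hp' := hγ.mem_posQuad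
    rw [mem_posQuad_iff] at hp'
    rw [isStep_iff] at hpz
    rcases hδ.eq_singleton_or_exists_append with ⟨rfl, rfl⟩ | ⟨q', δ, hqz, hδ', rfl⟩
    · simp at hpq
      omega
    · rw [isStep_iff] at hqz
      rw [List.zipWith_append (hγ.length_eq_length hδ' (by omega)), List.zipWith_cons_cons,
        List.zipWith_nil_left]
      exact (ih hδ' (by omega)).append_singleton
        (hf (isStep_iff.2 hpz) (isStep_iff.2 hqz) (by omega))

lemma lowerSite_add_upperSite (ω : Site → ℝ) (s t : Site) :
    ω (lowerSite s t) + ω (upperSite s t) = ω s + ω t := by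
  unfold lowerSite upperSite
  split_ifs <;> ring

lemma plen_zipWith_lowerSite_add_upperSite (ω : Site → ℝ) :
    ∀ {γ δ : List Site}, γ.length = δ.length →
      plen ω (List.zipWith lowerSite γ δ) + plen ω (List.zipWith upperSite γ δ) =
        plen ω γ + plen ω δ
  | [], [], _ => by simp
  | s :: γ, t :: δ, h => by
    have := plen_zipWith_lowerSite_add_upperSite ω (γ := γ) (δ := δ) (by simpa using h)
    simp only [List.zipWith_cons_cons, plen_cons]
    linarith [lowerSite_add_upperSite ω s t]

lemma heights_zipWith_lowerSite {γ δ : List Site} (h : γ.length = δ.length) :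
    heights (List.zipWith lowerSite γ δ) = heights γ ⊓ heights δ := by
  funext i
  simp only [Pi.inf_apply, heights]
  by_cases hi : i < γ.length
  · rw [List.getD_eq_getElem _ _ (by simp [← h, hi]), List.getD_eq_getElem _ _ hi,
      List.getD_eq_getElem _ _ (h ▸ hi), List.getElem_zipWith]
    unfold lowerSite
    split_ifs <;> omega
  · rw [List.getD_eq_default _ _ (by simp; omega), List.getD_eq_default _ _ (by omega),
      List.getD_eq_default _ _ (by omega)]
    simp

lemma IsOptimal.zipWith_lowerSite {ω : Site → ℝ} {z : Site} {γ δ : List Site}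
    (hγ : IsOptimal ω z γ) (hδ : IsOptimal ω z δ) :
    IsOptimal ω z (List.zipWith lowerSite γ δ) := by
  have hlow : IsPathTo z (List.zipWith lowerSite γ δ) := by
    simpa [lowerSite] using hγ.1.zipWith (by simp [lowerSite]) isStep_lowerSite hδ.1 rfl
  have hup : IsPathTo z (List.zipWith upperSite γ δ) := by
    simpa [upperSite] using hγ.1.zipWith (by simp [upperSite]) isStep_upperSite hδ.1 rfl
  have hsum := plen_zipWith_lowerSite_add_upperSite ω (hγ.1.length_eq_length hδ.1 rfl)
  have hup_le := hγ.2 _ hup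
  have hγδ := hδ.2 _ hγ.1
  exact ⟨hlow, fun γ' hγ' => by linarith [hγ.2 γ' hγ']⟩

section LowOptimal

variable {ω : Site → ℝ} {z : Site}

lemma exists_isOptimal (ω : Site → ℝ) (hz : z ∈ posQuad) : ∃ γ, IsOptimal ω z γ := by
  obtain ⟨γ, hγ, hmax⟩ :=
    Set.exists_max_image _ (plen ω) (finite_setOf_isPathTo z) (exists_isPathTo hz)
  exact ⟨γ, hγ, hmax⟩

lemma exists_isLowOptimal (ω : Site → ℝ) (hz : z ∈ posQuad) : ∃ γ, IsLowOptimal ω z γ := by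
  obtain ⟨γ, hγ, hmin⟩ := Set.Finite.exists_minimalFor heights {γ | IsOptimal ω z γ}
    ((finite_setOf_isPathTo z).subset fun _ h => h.1) (exists_isOptimal ω hz)
  -- the lower envelope of `γ` and `δ` is optimal, so minimality of `γ` puts it below `δ`
  refine ⟨γ, hγ, fun δ hδ => Below.of_heights_le ?_⟩
  have hinf := heights_zipWith_lowerSite (hγ.1.length_eq_length hδ.1 rfl)
  calc heights γ ≤ heights (List.zipWith lowerSite γ δ) :=
        hmin (hγ.zipWith_lowerSite hδ) (hinf ▸ inf_le_left)
    _ ≤ heights δ := hinf ▸ inf_le_right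

lemma isLowOptimal_lowOpt (ω : Site → ℝ) (hz : z ∈ posQuad) : IsLowOptimal ω z (lowOpt ω z) := by
  rw [lowOpt, dif_pos (exists_isLowOptimal ω hz)]
  exact (exists_isLowOptimal ω hz).choose_spec

lemma isPathTo_lowOpt (ω : Site → ℝ) (hz : z ∈ posQuad) : IsPathTo z (lowOpt ω z) :=
  (isLowOptimal_lowOpt ω hz).1.1

lemma IsLowOptimal.lowOpt_eq {γ : List Site} (h : IsLowOptimal ω z γ) : lowOpt ω z = γ :=
  have h' := isLowOptimal_lowOpt ω h.1.1.mem_posQuad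
  (h'.2 _ h.1).antisymm (h.2 _ h'.1) h'.1.1 h.1.1

lemma IsLowOptimal.of_append_singleton {p : Site} {γ : List Site}
    (h : IsLowOptimal ω z (γ ++ [z])) (hγ : IsPathTo p γ) (hpz : IsStep p z) :
    IsLowOptimal ω p γ := by
  have hopt : IsOptimal ω p γ := ⟨hγ, fun δ hδ => by
    simpa using h.1.2 _ (hδ.append_singleton hpz)⟩
  refine ⟨hopt, fun δ hδ => Below.of_append_singleton (h.2 _ ⟨hδ.1.append_singleton hpz,
    fun γ' hγ' => ?_⟩)⟩
  have := h.1.2 γ' hγ'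
  have := hδ.2 γ hγ
  simp only [plen_append_singleton] at *
  linarith

lemma fst_le_of_mem_lowOpt {s : Site} (hz : z ∈ posQuad) (hs : s ∈ lowOpt ω z) : s.1 ≤ z.1 :=
  ((isPathTo_lowOpt ω hz).mem_Icc s hs).2.1

end LowOptimal

/-- `G_ω(z) = ω(γ_z^ω)`, the maximal length of a path in `Γ_z` (and `0` off `ℤ₊²`). -/
noncomputable def lastPassageTime (ω : Site → ℝ) (z : Site) : ℝ := plen ω (lowOpt ω z)

section LastPassage

variable {ω : Site → ℝ} {p z : Site}

lemma lastPassageTime_origin (ω : Site → ℝ) : lastPassageTime ω (0, 0) = ω (0, 0) := by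
  rw [lastPassageTime, isPathTo_origin_iff.1 (isPathTo_lowOpt ω ⟨le_rfl, le_rfl⟩)]
  simp

lemma plen_le_lastPassageTime {γ : List Site} (hγ : IsPathTo z γ) :
    plen ω γ ≤ lastPassageTime ω z :=
  (isLowOptimal_lowOpt ω hγ.mem_posQuad).1.2 γ hγ

lemma lastPassageTime_add_le (hp : p ∈ posQuad) (hpz : IsStep p z) :
    lastPassageTime ω p + ω z ≤ lastPassageTime ω z := by
  have := plen_le_lastPassageTime (ω := ω) ((isPathTo_lowOpt ω hp).append_singleton hpz)
  rwa [plen_append_singleton] at this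

lemma lastPassageTime_eq_add_of_lowOpt_eq_append (hL : lowOpt ω z = lowOpt ω p ++ [z]) :
    lastPassageTime ω z = lastPassageTime ω p + ω z := by
  rw [lastPassageTime, hL, plen_append_singleton, lastPassageTime]

lemma exists_lowOpt_eq_append (hz : z ∈ posQuad) (hz0 : z ≠ (0, 0)) :
    ∃ q ∈ posQuad, IsStep q z ∧ lowOpt ω z = lowOpt ω q ++ [z] := by
  have hL := isLowOptimal_lowOpt ω hz
  rcases hL.1.1.eq_singleton_or_exists_append with ⟨h, -⟩ | ⟨q, δ, hqz, hδ, hδz⟩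
  · exact absurd h hz0
  rw [hδz] at hL ⊢
  exact ⟨q, hδ.mem_posQuad, hqz, by rw [(hL.of_append_singleton hδ hqz).lowOpt_eq]⟩

lemma snd_le_of_lowOpt_eq_append {q : Site} (hq : q ∈ posQuad) (hqz : IsStep q z)
    (hL : lowOpt ω z = lowOpt ω q ++ [z]) (hp : p ∈ posQuad) (hpz : IsStep p z)
    (hG : lastPassageTime ω q ≤ lastPassageTime ω p) : q.2 ≤ p.2 := by
  have hz := hqz.mem_posQuad hq
  have hopt : IsOptimal ω z (lowOpt ω p ++ [z]) := by
    refine ⟨(isPathTo_lowOpt ω hp).append_singleton hpz, fun γ hγ => ?_⟩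
    have := plen_le_lastPassageTime (ω := ω) hγ
    rw [lastPassageTime_eq_add_of_lowOpt_eq_append hL] at this
    rw [plen_append_singleton]
    exact this.trans (add_le_add_left hG _)
  have hbelow := (isLowOptimal_lowOpt ω hz).2 _ hopt
  rw [hL] at hbelow
  rw [isStep_iff] at hpz hqz
  exact hbelow.of_append_singleton.snd_le (isPathTo_lowOpt ω hq) (isPathTo_lowOpt ω hp) (by omega)

end LastPassage

/-- The predecessor of `z` on `γ_z^ω`; ties go to the lower site because `γ_z^ω` is the lowest
optimal path. -/
noncomputable def lowPred (ω : Site → ℝ) (z : Site) : Site :=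
  if z.2 = 0 ∨ z.1 ≠ 0 ∧ lastPassageTime ω (z - (0, 1)) < lastPassageTime ω (z - (1, 0)) then
    z - (1, 0)
  else z - (0, 1)

section LowPred

variable {ω : Site → ℝ} {z : Site}

lemma eq_lowPred_of_lowOpt_eq_append {q : Site} (hq : q ∈ posQuad) (hqz : IsStep q z)
    (hL : lowOpt ω z = lowOpt ω q ++ [z]) : q = lowPred ω z := by
  have hz := hqz.mem_posQuad hq
  have hmax : ∀ p ∈ posQuad, IsStep p z → lastPassageTime ω p ≤ lastPassageTime ω q := by
    intro p hp hpz
    have := lastPassageTime_add_le (ω := ω) hp hpz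
    rw [lastPassageTime_eq_add_of_lowOpt_eq_append hL] at this
    exact le_of_add_le_add_right this
  have htie := fun p => snd_le_of_lowOpt_eq_append (p := p) hq hqz hL
  rw [mem_posQuad_iff] at hq hz
  rw [isStep_iff_eq_sub] at hqz
  unfold lowPred
  split_ifs with hc
  · refine hqz.resolve_right fun hq01 => ?_
    rcases hc with hy | ⟨hx, hlt⟩
    · simp [hq01] at hq
      omega
    · have := hmax (z - (1, 0)) (by simp; omega) (isStep_iff_eq_sub.2 (Or.inl rfl))
      rw [← hq01] at hlt
      linarith
  · refine hqz.resolve_left fun hq10 => ?_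
    simp only [not_or, not_and, not_lt] at hc
    have hx : z.1 ≠ 0 := by simp [hq10] at hq; omega
    have := htie (z - (0, 1)) (by simp; omega) (isStep_iff_eq_sub.2 (Or.inr rfl))
      (hq10 ▸ hc.2 hx)
    simp [hq10] at this

lemma lowPred_spec (ω : Site → ℝ) (hz : z ∈ posQuad) (hz0 : z ≠ (0, 0)) :
    lowPred ω z ∈ posQuad ∧ IsStep (lowPred ω z) z ∧
      lowOpt ω z = lowOpt ω (lowPred ω z) ++ [z] := by
  obtain ⟨q, hq, hqz, hL⟩ := exists_lowOpt_eq_append (ω := ω) hz hz0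
  rw [← eq_lowPred_of_lowOpt_eq_append hq hqz hL]
  exact ⟨hq, hqz, hL⟩

lemma lastPassageTime_eq_lowPred_add (ω : Site → ℝ) (hz : z ∈ posQuad) (hz0 : z ≠ (0, 0)) :
    lastPassageTime ω z = lastPassageTime ω (lowPred ω z) + ω z :=
  lastPassageTime_eq_add_of_lowOpt_eq_append (lowPred_spec ω hz hz0).2.2

end LowPred

lemma translate_mem_posQuad {a : ℤ} (ha : 0 ≤ a) {z : Site} (hz : z ∈ posQuad) :
    (a, 0) + z ∈ posQuad := by
  rw [mem_posQuad_iff] at hz ⊢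
  simp only [Prod.fst_add, Prod.snd_add]
  omega

lemma translate_ne_origin {a : ℤ} (ha : 0 ≤ a) {z : Site} (hz : z ∈ posQuad) (hx : z.1 ≠ 0) :
    (a, 0) + z ≠ (0, 0) := by
  intro h0
  have := congrArg Prod.fst h0
  rw [mem_posQuad_iff] at hz
  simp only [Prod.fst_add] at this
  omega

lemma lowPred_translate {ω ω' : Site → ℝ} {a : ℤ} (ha : 0 ≤ a) {z : Site} (hz : z ∈ posQuad)
    (hx : z.1 ≠ 0)
    (hG : ∀ p ∈ posQuad, IsStep p z → lastPassageTime ω' p = lastPassageTime ω ((a, 0) + p)) :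
    lowPred ω ((a, 0) + z) = (a, 0) + lowPred ω' z := by
  rw [mem_posQuad_iff] at hz
  have hsub : ∀ e : Site, (a, 0) + z - e = (a, 0) + (z - e) := fun e => add_sub_assoc _ _ _
  have hax : a + z.1 ≠ 0 := by omega
  unfold lowPred
  simp only [hsub, Prod.fst_add, Prod.snd_add, zero_add, hx, hax, ne_eq, not_false_eq_true,
    true_and]
  by_cases hy : z.2 = 0
  · simp [hy]
  · rw [← hG _ (by simp; omega) (isStep_iff_eq_sub.2 (Or.inl rfl)),
      ← hG _ (by simp; omega) (isStep_iff_eq_sub.2 (Or.inr rfl))]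
    split_ifs <;> rfl

/-- `ωb` is the configuration `ω^b` for `b = (a, 0)`. -/
structure IsTranslatedConfig (ω : Site → ℝ) (a : ℤ) (ωb : Site → ℝ) : Prop where
  origin : ωb (0, 0) = lastPassageTime ω (a, 0)
  axis : ∀ y : ℤ, 1 ≤ y →
    ωb (0, y) = lastPassageTime ω ((a, 0) + (0, y)) - lastPassageTime ω ((a, 0) + (0, y - 1))
  off_axis : ∀ z : Site, z ≠ (0, 0) → ¬(z.1 = 0 ∧ 1 ≤ z.2) → ωb z = ω ((a, 0) + z)

namespace IsTranslatedConfig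

variable {ω ωb : Site → ℝ} {a : ℤ}

theorem lastPassageTime_eq (h : IsTranslatedConfig ω a ωb) (ha : 0 ≤ a) {z : Site}
    (hz : z ∈ posQuad) : lastPassageTime ωb z = lastPassageTime ω ((a, 0) + z) := by
  induction z, hz using posQuad_induction with
  | origin => simpa [lastPassageTime_origin] using h.origin
  | step z hz hz0 ih =>
    obtain ⟨hp, hpz, -⟩ := lowPred_spec ωb hz hz0
    rw [lastPassageTime_eq_lowPred_add ωb hz hz0, ih _ hp hpz]
    by_cases hx : z.1 = 0
    · obtain ⟨x, y⟩ := z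
      obtain rfl : x = 0 := hx
      have hy : 1 ≤ y := by
        have : y ≠ 0 := fun hy => hz0 (by rw [hy])
        simp at hz
        omega
      have hpred : lowPred ωb (0, y) = (0, y - 1) := by
        simp [lowPred, show y ≠ 0 by omega]
      rw [hpred, h.axis y hy]
      simp
    · rw [h.off_axis z hz0 (fun hz => hx hz.1), ← lowPred_translate ha hz hx ih,
        ← lastPassageTime_eq_lowPred_add ω (translate_mem_posQuad ha hz)
          (translate_ne_origin ha hz hx)]

theorem nonneg (h : IsTranslatedConfig ω a ωb) (ha : 0 ≤ a) (hω : ∀ z, 0 ≤ ω z) (z : Site) :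
    0 ≤ ωb z := by
  by_cases hz0 : z = (0, 0)
  · rw [hz0, h.origin]
    exact plen_nonneg hω _
  by_cases hax : z.1 = 0 ∧ 1 ≤ z.2
  · obtain ⟨x, y⟩ := z
    obtain ⟨rfl, hy⟩ := hax
    rw [h.axis y hy, sub_nonneg]
    have := lastPassageTime_add_le (ω := ω) (p := (a, 0) + (0, y - 1)) (z := (a, 0) + (0, y))
      (translate_mem_posQuad ha (by simp; omega)) (by rw [isStep_iff]; simp)
    linarith [hω ((a, 0) + (0, y))]
  · rw [h.off_axis z hz0 hax]
    exact hω _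

theorem mem_lowOpt_iff (h : IsTranslatedConfig ω a ωb) (ha : 0 ≤ a) {u : Site} (hu : 1 ≤ u.1)
    {z : Site} (hz : z ∈ posQuad) : u ∈ lowOpt ωb z ↔ (a, 0) + u ∈ lowOpt ω ((a, 0) + z) := by
  have haxis : ∀ z ∈ posQuad, z.1 = 0 → (u ∈ lowOpt ωb z ↔ (a, 0) + u ∈ lowOpt ω ((a, 0) + z)) := by
    intro z hz hx
    refine iff_of_false (fun hu' => ?_) (fun hu' => ?_)
    · have := fst_le_of_mem_lowOpt hz hu'
      omega
    · have := fst_le_of_mem_lowOpt (translate_mem_posQuad ha hz) hu'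
      simp at this
      omega
  induction z, hz using posQuad_induction with
  | origin => exact haxis _ ⟨le_rfl, le_rfl⟩ rfl
  | step z hz hz0 ih =>
    by_cases hx : z.1 = 0
    · exact haxis z hz hx
    obtain ⟨hp, hpz, hL⟩ := lowPred_spec ωb hz hz0
    have hih : _ ↔ _ := ih _ hp hpz
    rw [hL, (lowPred_spec ω (translate_mem_posQuad ha hz) (translate_ne_origin ha hz hx)).2.2,
      lowPred_translate ha hz hx fun p hp _ => h.lastPassageTime_eq ha hp, List.mem_append,
      List.mem_append, hih, List.mem_singleton, List.mem_singleton, add_right_inj]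

theorem treeV_eq (h : IsTranslatedConfig ω a ωb) (ha : 0 ≤ a) {u : Site} (hu : 1 ≤ u.1) :
    treeV ωb u = (· - (a, 0)) '' treeV ω ((a, 0) + u) := by
  ext w
  simp only [treeV, Set.mem_image]
  constructor
  · rintro ⟨hw, hmem⟩
    exact ⟨(a, 0) + w, ⟨translate_mem_posQuad ha hw, (h.mem_lowOpt_iff ha hu hw).1 hmem⟩,
      add_sub_cancel_left _ _⟩
  · rintro ⟨x, ⟨hx, hmem⟩, rfl⟩
    have hle := fst_le_of_mem_lowOpt hx hmem
    have hw : x - (a, 0) ∈ posQuad := by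
      simp only [mem_posQuad_iff, Prod.fst_add, Prod.fst_sub, Prod.snd_sub] at hx hle ⊢
      omega
    refine ⟨hw, (h.mem_lowOpt_iff ha hu hw).2 ?_⟩
    rwa [add_sub_cancel]

end IsTranslatedConfig

/-- Step II of the proof of Theorem 3: with `b = (m-1,0)`, the configuration `ω^b`
is nonnegative, satisfies `ω^b(γ_z^{ω^b}) = ω(γ_{b+z}^ω)` for all `z ∈ ℤ₊²`, and
`V(T_{(1,1)}^{ω^b}) = V(T_{(m,1)}^ω) − b`. -/
theorem translated_configuration_axis (ω : Site → ℝ) (hω : ∀ z : Site, 0 ≤ ω z)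
    (m : ℕ) (hm : 1 ≤ m) (ωb : Site → ℝ)
    (h0 : ωb (0, 0) = plen ω (lowOpt ω ((m : ℤ) - 1, 0)))
    (hy : ∀ y : ℤ, 1 ≤ y →
      ωb (0, y) = plen ω (lowOpt ω (((m : ℤ) - 1, 0) + (0, y)))
        - plen ω (lowOpt ω (((m : ℤ) - 1, 0) + (0, y - 1))))
    (hoth : ∀ z : Site, z ≠ (0, 0) → ¬(z.1 = 0 ∧ 1 ≤ z.2) →
      ωb z = ω (((m : ℤ) - 1, 0) + z)) :
    (∀ z : Site, 0 ≤ ωb z) ∧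
    (∀ z ∈ posQuad, plen ωb (lowOpt ωb z) = plen ω (lowOpt ω (((m : ℤ) - 1, 0) + z))) ∧
    treeV ωb (1, 1) = (· - (((m : ℤ) - 1, 0) : Site)) '' treeV ω ((m : ℤ), 1) := by
  have h : IsTranslatedConfig ω ((m : ℤ) - 1) ωb := ⟨h0, hy, hoth⟩
  have ha : (0 : ℤ) ≤ (m : ℤ) - 1 := by omega
  refine ⟨h.nonneg ha hω, fun z hz => h.lastPassageTime_eq ha hz, ?_⟩
  have hroot : (((m : ℤ) - 1, 0) + (1, 1) : Site) = ((m : ℤ), 1) := by simp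
  simpa only [hroot] using h.treeV_eq ha (u := (1, 1)) le_rfl
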